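/- The adjoint of the shift semigroup acts on the biorthogonal functions by 𝒰_t^* g_n^* = e^{conj(λ_n) t} g_n^* for every n ∈ ℤ and t ≥ 0. -/

import Mathlib

/-!
On `H_α^T` the derivative factors as `h' y = e^{λ_n y} p y` with `p` periodic of period `T`
(`periodicPart`), while `conj (g_n^*)' x · e^{αx}` is a constant times `w x · e^{-λ_n x}`, where
the weight `w x = e^{2λ (cut x - x)}` satisfies `w (x + T) = e^{-2λT} w x`. So the integrand of
`⟨𝒰_t h, g_n^*⟩_α` is `e^{λ_n t}` times `w x · p (x + t)`, and summing the geometric series over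
the periods gives `∫_{[0,∞)} w x · p (x + t) dx = (1 - e^{-2λT})⁻¹ ∫_0^T p`, independent of `t`.
The boundary term vanishes because `g_n^*(0) = 0`.
-/

open MeasureTheory Complex

/-- `cut T x = x mod T`. -/
noncomputable def cut (T x : ℝ) : ℝ := x - T * ⌊x / T⌋

/-- `λ_n = 2πin/T - λ - α/2`. -/
noncomputable def lamn (T lm al : ℝ) (n : ℤ) : ℂ :=
  2 * Real.pi * Complex.I * n / T - lm - al / 2

/-- `e_n(x) = T^{-1/2} exp((2πin/T - λ)x)`. -/
noncomputable def efun (T lm : ℝ) (n : ℤ) (x : ℝ) : ℂ :=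
  (1 / Real.sqrt T : ℝ) • Complex.exp ((2 * Real.pi * Complex.I * n / T - lm) * x)

/-- the derivative of `g_n^*`: `y ↦ e^{-αy/2} (1-e^{-2λT}) e^{2λ cut(y)} e_n(y)`. -/
noncomputable def dgnstar (T lm al : ℝ) (n : ℤ) (y : ℝ) : ℂ :=
  (Real.exp (-al * y / 2) * ((1 - Real.exp (-2 * lm * T)) * Real.exp (2 * lm * cut T y)))
    • efun T lm n y

/-- `g_n^*(x) = ∫₀^x e^{-αy/2} e_n^*(y) dy`. -/
noncomputable def gnstar (T lm al : ℝ) (n : ℤ) (x : ℝ) : ℂ :=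
  ∫ y in (0:ℝ)..x, dgnstar T lm al n y

open Set

lemma cut_periodic {T : ℝ} (hT : T ≠ 0) : Function.Periodic (cut T) T := fun x => by
  rw [cut, cut, add_div, div_self hT, Int.floor_add_one]
  push_cast
  ring

lemma cut_eq_self {T x : ℝ} (hT : 0 < T) (hx : x ∈ Ico 0 T) : cut T x = x := by
  have : ⌊x / T⌋ = 0 :=
    Int.floor_eq_zero_iff.mpr ⟨div_nonneg hx.1 hT.le, (div_lt_one hT).mpr hx.2⟩
  simp [cut, this]

section SelfSimilar

variable {E : Type*} [NormedAddCommGroup E] [NormedSpace ℝ E] {G : ℝ → E} {T c : ℝ}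

lemma Ici_zero_eq_iUnion_Ico_nat_mul (hT : 0 < T) :
    Ici (0 : ℝ) = ⋃ k : ℕ, Ico (k * T) ((k + 1 : ℕ) * T) := by
  ext x
  simp only [mem_Ici, mem_iUnion, mem_Ico, Nat.cast_succ]
  refine ⟨fun hx => ⟨⌊x / T⌋₊, ?_, ?_⟩, fun ⟨k, hk, _⟩ => le_trans (by positivity) hk⟩
  · exact (le_div_iff₀ hT).mp (Nat.floor_le (div_nonneg hx hT.le))
  · exact (div_lt_iff₀ hT).mp (Nat.lt_floor_add_one _)

lemma apply_add_nat_mul_eq_pow_smul (hT : 0 ≤ T) (hG : ∀ x, 0 ≤ x → G (x + T) = c • G x)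
    (k : ℕ) {x : ℝ} (hx : 0 ≤ x) : G (x + k * T) = c ^ k • G x := by
  induction k with
  | zero => simp
  | succ k ih =>
    rw [Nat.cast_succ, add_one_mul, ← add_assoc, hG _ (by positivity), ih, pow_succ', mul_smul]

lemma preimage_add_nat_mul_Ico (T : ℝ) (k : ℕ) :
    (· + k * T) ⁻¹' Ico (k * T) ((k + 1 : ℕ) * T) = Ico 0 T := by
  ext x
  simp only [mem_preimage, mem_Ico, Nat.cast_succ]
  constructor <;> rintro ⟨h₁, h₂⟩ <;> constructor <;> linarith

lemma integrableOn_Ico_nat_mul (hT : 0 ≤ T) (hG : ∀ x, 0 ≤ x → G (x + T) = c • G x)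
    (hint : IntegrableOn G (Ico 0 T)) (k : ℕ) :
    IntegrableOn G (Ico (k * T) ((k + 1 : ℕ) * T)) := by
  rw [← (measurePreserving_add_right volume (k * T)).integrableOn_comp_preimage
    (measurableEmbedding_addRight _), preimage_add_nat_mul_Ico]
  exact IntegrableOn.congr_fun (hint.smul (c ^ k))
    (fun x hx => (apply_add_nat_mul_eq_pow_smul hT hG k hx.1).symm) measurableSet_Ico

lemma setIntegral_Ico_nat_mul_eq_pow_smul (hT : 0 ≤ T) (hG : ∀ x, 0 ≤ x → G (x + T) = c • G x)
    (k : ℕ) :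
    ∫ x in Ico (k * T) ((k + 1 : ℕ) * T), G x = c ^ k • ∫ x in Ico 0 T, G x := by
  rw [← (measurePreserving_add_right volume (k * T)).setIntegral_preimage_emb
    (measurableEmbedding_addRight _), preimage_add_nat_mul_Ico, ← integral_smul]
  exact setIntegral_congr_fun measurableSet_Ico
    (fun x hx => apply_add_nat_mul_eq_pow_smul hT hG k hx.1)

lemma pairwise_disjoint_Ico_nat_mul (hT : 0 ≤ T) :
    Pairwise (Function.onFun Disjoint fun k : ℕ => Ico (k * T) ((k + 1 : ℕ) * T)) :=
  Monotone.pairwise_disjoint_on_Ico_succ fun _ _ h => by gcongr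

lemma setIntegral_Ici_zero_eq_inv_one_sub_smul (hT : 0 < T) (hc₀ : 0 ≤ c) (hc₁ : c < 1)
    (hG : ∀ x, 0 ≤ x → G (x + T) = c • G x) :
    ∫ x in Ici 0, G x = (1 - c)⁻¹ • ∫ x in Ico 0 T, G x := by
  by_cases hint : IntegrableOn G (Ico 0 T)
  swap
  -- both sides are then the junk value `0`
  · have hint' : ¬ IntegrableOn G (Ici 0) := fun h => hint (h.mono_set Ico_subset_Ici_self)
    rw [integral_undef hint', integral_undef hint, smul_zero]
  have hnorm : ∀ x, 0 ≤ x → ‖G (x + T)‖ = c • ‖G x‖ := fun x hx => by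
    rw [hG x hx, norm_smul, Real.norm_of_nonneg hc₀, smul_eq_mul]
  have hsum : Summable fun k : ℕ => ∫ x in Ico (k * T) ((k + 1 : ℕ) * T), ‖G x‖ := by
    simp_rw [setIntegral_Ico_nat_mul_eq_pow_smul (G := fun x => ‖G x‖) hT.le hnorm, smul_eq_mul]
    exact (summable_geometric_of_lt_one hc₀ hc₁).mul_right _
  have hint' := integrableOn_iUnion_of_summable_integral_norm
    (integrableOn_Ico_nat_mul hT.le hG hint) hsum
  have hsplit := hasSum_integral_iUnion (fun _ => measurableSet_Ico)
    (pairwise_disjoint_Ico_nat_mul hT.le) hint'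
  rw [← Ici_zero_eq_iUnion_Ico_nat_mul hT] at hsplit
  simp_rw [setIntegral_Ico_nat_mul_eq_pow_smul hT.le hG] at hsplit
  exact hsplit.unique ((hasSum_geometric_of_lt_one hc₀ hc₁).smul_const _)

lemma setIntegral_Ici_exp_cut_smul_periodic {P : ℝ → E} {μ : ℝ} (hT : 0 < T) (hμ : 0 < μ)
    (hP : Function.Periodic P T) (s : ℝ) :
    ∫ x in Ici 0, Real.exp (μ * (cut T x - x)) • P (x + s)
      = (1 - Real.exp (-(μ * T)))⁻¹ • ∫ x in 0..T, P x := by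
  have hc₁ : Real.exp (-(μ * T)) < 1 := Real.exp_lt_one_iff.mpr (neg_lt_zero.mpr (by positivity))
  rw [setIntegral_Ici_zero_eq_inv_one_sub_smul hT (Real.exp_pos _).le hc₁]
  · congr 1
    calc ∫ x in Ico 0 T, Real.exp (μ * (cut T x - x)) • P (x + s)
        = ∫ x in Ico 0 T, P (x + s) :=
          setIntegral_congr_fun measurableSet_Ico fun x hx => by simp [cut_eq_self hT hx]
      _ = ∫ x in s..s + T, P x := by
          rw [integral_Ico_eq_integral_Ioc, ← intervalIntegral.integral_of_le hT.le,
            intervalIntegral.integral_comp_add_right, zero_add, add_comm]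
      _ = ∫ x in 0..T, P x := by simpa using hP.intervalIntegral_add_eq s 0
  · intro x _
    rw [cut_periodic hT.ne' x, add_right_comm, hP, smul_smul, ← Real.exp_add]
    ring_nf

end SelfSimilar

lemma cexp_lamn_mul_sub_cut {T : ℝ} (hT : T ≠ 0) (lm al : ℝ) (n : ℤ) (y : ℝ) :
    cexp (lamn T lm al n * (y - cut T y)) = Real.exp ((lm + al / 2) * (cut T y - y)) := by
  have hsub : y - cut T y = T * ⌊y / T⌋ := by simp [cut]
  have : lamn T lm al n * (y - cut T y)
      = ((n * ⌊y / T⌋ : ℤ) : ℂ) * (2 * Real.pi * I) + ((lm + al / 2) * (cut T y - y) : ℝ) := by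
    have hT' : (T : ℂ) ≠ 0 := Complex.ofReal_ne_zero.mpr hT
    rw [← Complex.ofReal_sub, hsub, show cut T y - y = -(T * ⌊y / T⌋) by linarith, lamn]
    push_cast
    field_simp
    ring
  rw [this, Complex.exp_add, Complex.exp_int_mul_two_pi_mul_I, one_mul, Complex.ofReal_exp]

noncomputable def periodicPart (T lm al : ℝ) (n : ℤ) (h' : ℝ → ℂ) (u : ℝ) : ℂ :=
  cexp (-lamn T lm al n * cut T u) * h' (cut T u)

lemma periodicPart_periodic {T : ℝ} (hT : T ≠ 0) (lm al : ℝ) (n : ℤ) (h' : ℝ → ℂ) :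
    Function.Periodic (periodicPart T lm al n h') T := fun u => by
  simp only [periodicPart, cut_periodic hT u]

lemma eq_cexp_lamn_mul_periodicPart {T lm al : ℝ} (hT : T ≠ 0) (n : ℤ) {h' : ℝ → ℂ} {y : ℝ}
    (hy : h' y = Real.exp ((lm + al / 2) * (cut T y - y)) • h' (cut T y)) :
    h' y = cexp (lamn T lm al n * y) * periodicPart T lm al n h' y := by
  rw [hy, Complex.real_smul, ← cexp_lamn_mul_sub_cut hT lm al n y, periodicPart, ← mul_assoc,
    ← Complex.exp_add]
  ring_nf

lemma conj_dgnstar_mul_exp (T lm al : ℝ) (n : ℤ) (x : ℝ) :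
    starRingEnd ℂ (dgnstar T lm al n x) * Real.exp (al * x)
      = ((1 - Real.exp (-2 * lm * T)) / Real.sqrt T : ℝ)
        * (Real.exp (2 * lm * (cut T x - x)) * cexp (-lamn T lm al n * x)) := by
  simp only [dgnstar, efun, lamn, div_eq_mul_one_div (1 - Real.exp _)]
  generalize 1 - Real.exp (-2 * lm * T) = K
  generalize 1 / √T = S
  simp only [Complex.real_smul, map_mul, Complex.conj_ofReal, ← Complex.exp_conj, map_sub,
    map_div₀, map_intCast, Complex.conj_I, map_ofNat, Complex.ofReal_exp, Complex.ofReal_mul]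
  push_cast
  calc _ = K * S * (cexp (-al * x / 2) * cexp (2 * lm * cut T x)
        * cexp ((2 * Real.pi * -I * n / T - lm) * x) * cexp (al * x)) := by ring
    _ = _ := by simp only [← Complex.exp_add]; ring_nf

lemma setIntegral_comp_add_mul_conj_dgnstar {T lm al : ℝ} (hT : 0 < T) (hl : 0 < lm) (n : ℤ)
    {h' : ℝ → ℂ}
    (hmem : ∀ x, 0 ≤ x → h' x = Real.exp ((lm + al / 2) * (cut T x - x)) • h' (cut T x))
    {s : ℝ} (hs : 0 ≤ s) :
    ∫ x in Ici 0, h' (x + s) * starRingEnd ℂ (dgnstar T lm al n x) * Real.exp (al * x)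
      = cexp (lamn T lm al n * s)
        * ∫ x in Ici 0, h' x * starRingEnd ℂ (dgnstar T lm al n x) * Real.exp (al * x) := by
  have hshift : ∀ u, 0 ≤ u →
      ∫ x in Ici 0, h' (x + u) * starRingEnd ℂ (dgnstar T lm al n x) * Real.exp (al * x)
        = cexp (lamn T lm al n * u) * ((1 - Real.exp (-2 * lm * T)) / Real.sqrt T : ℝ)
          * ((1 - Real.exp (-(2 * lm * T)))⁻¹ • ∫ x in 0..T, periodicPart T lm al n h' x) := by
    intro u hu
    rw [← setIntegral_Ici_exp_cut_smul_periodic hT (by positivity)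
      (periodicPart_periodic hT.ne' lm al n h') u, ← integral_const_mul]
    refine setIntegral_congr_fun measurableSet_Ici fun x hx => ?_
    have hsplit_exp : cexp (lamn T lm al n * ↑(x + u))
        = cexp (lamn T lm al n * u) * cexp (lamn T lm al n * x) := by
      rw [← Complex.exp_add]; push_cast; ring_nf
    have hinv : cexp (lamn T lm al n * x) * cexp (-lamn T lm al n * x) = 1 := by
      rw [← Complex.exp_add]; simp
    rw [mul_assoc, conj_dgnstar_mul_exp,
      eq_cexp_lamn_mul_periodicPart hT.ne' n (hmem _ (add_nonneg hx hu)), hsplit_exp,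
      Complex.real_smul]
    linear_combination (cexp (lamn T lm al n * u)
      * ((1 - Real.exp (-2 * lm * T)) / Real.sqrt T : ℝ)
      * Real.exp (2 * lm * (cut T x - x)) * periodicPart T lm al n h' (x + u)) * hinv
  have h0 := hshift 0 le_rfl
  simp only [add_zero, Complex.ofReal_zero, mul_zero, Complex.exp_zero, one_mul] at h0
  rw [hshift s hs, h0, mul_assoc]

theorem stmt_10_general (T lm al : ℝ) (hT : 0 < T) (hl : 0 < lm)
    (n : ℤ) (t : ℝ) (ht : 0 ≤ t)
    (h h' : ℝ → ℂ)
    (hmem : ∀ x, 0 ≤ x →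
      h' x = Real.exp ((lm + al / 2) * (cut T x - x)) • h' (cut T x)) :
    h t * (starRingEnd ℂ) (gnstar T lm al n 0)
        + (∫ x in Set.Ici (0:ℝ),
            h' (x + t) * (starRingEnd ℂ) (dgnstar T lm al n x) * Real.exp (al * x))
      = h 0 * (starRingEnd ℂ)
            (Complex.exp ((starRingEnd ℂ) (lamn T lm al n) * t) * gnstar T lm al n 0)
          + ∫ x in Set.Ici (0:ℝ),
              h' x * (starRingEnd ℂ)
                  (Complex.exp ((starRingEnd ℂ) (lamn T lm al n) * t) *
                    dgnstar T lm al n x) *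
                Real.exp (al * x) := by
  have hgnstar : gnstar T lm al n 0 = 0 := intervalIntegral.integral_same
  have hconj : ∀ x, starRingEnd ℂ (cexp (starRingEnd ℂ (lamn T lm al n) * t)
      * dgnstar T lm al n x) = cexp (lamn T lm al n * t) * starRingEnd ℂ (dgnstar T lm al n x) :=
    fun x => by rw [map_mul, ← Complex.exp_conj, map_mul, Complex.conj_conj, Complex.conj_ofReal]
  simp only [hgnstar, hconj, map_zero, mul_zero, zero_add]
  rw [setIntegral_comp_add_mul_conj_dgnstar hT hl n hmem ht, ← integral_const_mul]
  congr 1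
  ext x
  ring

/-- `𝒰_t^* g_n^* = e^{conj(λ_n) t} g_n^*`, expressed through the defining
property of the adjoint: for every `h ∈ H_α^T` (absolutely continuous with weak
derivative `h'`, weighted square-integrable, with `e^{α·/2} h' ∈ ran 𝒜`),
`⟨𝒰_t h, g_n^*⟩_α = ⟨h, e^{conj(λ_n) t} g_n^*⟩_α`, where
`⟨f,g⟩_α = f(0) conj(g(0)) + ∫₀^∞ f' conj(g') e^{αx} dx` and `(𝒰_t h)(x) = h(x+t)`. -/
theorem stmt_10 (T lm al : ℝ) (hT : 0 < T) (hl : 0 < lm) (hal : 0 < al)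
    (n : ℤ) (t : ℝ) (ht : 0 ≤ t)
    (h h' : ℝ → ℂ)
    (hrep : ∀ x, 0 ≤ x → h x = h 0 + ∫ y in (0:ℝ)..x, h' y)
    (hint : IntegrableOn (fun x => ‖h' x‖ ^ 2 * Real.exp (al * x)) (Set.Ici 0))
    (hmem : ∀ x, 0 ≤ x →
      h' x = Real.exp ((lm + al / 2) * (cut T x - x)) • h' (cut T x)) :
    h t * (starRingEnd ℂ) (gnstar T lm al n 0)
        + (∫ x in Set.Ici (0:ℝ),
            h' (x + t) * (starRingEnd ℂ) (dgnstar T lm al n x) * Real.exp (al * x))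
      = h 0 * (starRingEnd ℂ)
            (Complex.exp ((starRingEnd ℂ) (lamn T lm al n) * t) * gnstar T lm al n 0)
          + ∫ x in Set.Ici (0:ℝ),
              h' x * (starRingEnd ℂ)
                  (Complex.exp ((starRingEnd ℂ) (lamn T lm al n) * t) *
                    dgnstar T lm al n x) *
                Real.exp (al * x) :=
  stmt_10_general T lm al hT hl n t ht h h' hmem
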